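/- One step of gradient descent on the BCE recommendation loss can be rewritten as a linear map applied to the current representations: if R_{t+1} = R_t − α · ∇_R L(R_t) for learning rate α ∈ ℝ, then R_{t+1} = (I + α · A^grad(R_t)) · R_t, where I is the (n+m)×(n+m) identity matrix. -/

import Mathlib

open Matrix Finset

noncomputable section

/-- The sigmoid function `σ(x) = 1 / (1 + e^{-x})`. -/
def sigmoid (x : ℝ) : ℝ := 1 / (1 + Real.exp (-x))

/-- The softplus function `softplus(x) = log(1 + e^x)`. -/
def softplus (x : ℝ) : ℝ := Real.log (1 + Real.exp x)

/-- Dot product between the user row `u` (among the first `n` rows, encoded as `Sum.inl`)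
and the item row `i` (among the last `m` rows, encoded as `Sum.inr`) of the
representation matrix `R`. -/
def rowDot {n m d : ℕ} (R : Matrix (Fin n ⊕ Fin m) (Fin d) ℝ)
    (u : Fin n) (i : Fin m) : ℝ :=
  ∑ j, R (Sum.inl u) j * R (Sum.inr i) j

/-- The BCE recommendation loss
`L(R) = Σ_{(u,i)∈Ω} softplus(−⟨r_u, r_i⟩) + β · Σ_{(u,i)∉Ω} softplus(⟨r_u, r_i⟩)`. -/
def bceLoss {n m d : ℕ} (Ω : Finset (Fin n × Fin m)) (β : ℝ)
    (R : Matrix (Fin n ⊕ Fin m) (Fin d) ℝ) : ℝ :=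
  (∑ p ∈ Ω, softplus (-(rowDot R p.1 p.2)))
    + β * ∑ p ∈ Ωᶜ, softplus (rowDot R p.1 p.2)

/-- The partial derivative of `f` at `R` with respect to the `(k, j)` entry,
all other entries held fixed. -/
def pderivEntry {n m d : ℕ} (f : Matrix (Fin n ⊕ Fin m) (Fin d) ℝ → ℝ)
    (R : Matrix (Fin n ⊕ Fin m) (Fin d) ℝ) (k : Fin n ⊕ Fin m) (j : Fin d) : ℝ :=
  deriv (fun t : ℝ => f (R + t • Matrix.single k j (1 : ℝ))) 0

/-- The matrix `P^grad(R) ∈ ℝ^{n×m}` with entries `σ(−⟨r_u, r_i⟩)` for `(u,i) ∈ Ω`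
and `−β·σ(⟨r_u, r_i⟩)` otherwise. -/
def Pgrad {n m d : ℕ} (Ω : Finset (Fin n × Fin m)) (β : ℝ)
    (R : Matrix (Fin n ⊕ Fin m) (Fin d) ℝ) : Matrix (Fin n) (Fin m) ℝ :=
  Matrix.of fun u i =>
    if (u, i) ∈ Ω then sigmoid (-(rowDot R u i)) else -β * sigmoid (rowDot R u i)

/-- The block anti-diagonal matrix `A^grad(R) = [[0, P^grad(R)], [(P^grad(R))ᵀ, 0]]`. -/
def Agrad {n m d : ℕ} (Ω : Finset (Fin n × Fin m)) (β : ℝ)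
    (R : Matrix (Fin n ⊕ Fin m) (Fin d) ℝ) :
    Matrix (Fin n ⊕ Fin m) (Fin n ⊕ Fin m) ℝ :=
  Matrix.fromBlocks 0 (Pgrad Ω β R) (Pgrad Ω β R)ᵀ 0

/-- The gradient `∇_R L(R) ∈ ℝ^{(n+m)×d}`: the matrix whose `(k, j)` entry is the
partial derivative of the BCE loss with respect to `R_{k,j}`. -/
def gradLoss {n m d : ℕ} (Ω : Finset (Fin n × Fin m)) (β : ℝ)
    (R : Matrix (Fin n ⊕ Fin m) (Fin d) ℝ) : Matrix (Fin n ⊕ Fin m) (Fin d) ℝ :=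
  Matrix.of fun k j => pderivEntry (bceLoss Ω β) R k j
/-!
The loss depends on `R` only through the pairings `⟨r_u, r_i⟩`, and `R_{k,j}` enters
`⟨r_u, r_i⟩` linearly, with coefficient `R_{i,j}` if `k = u` and `R_{u,j}` if `k = i`.
Since `softplus' = σ`, the chain rule gives `∂L/∂R_{k,j} = -∑_{(u,i)} P^grad_{u,i} · ∂⟨r_u, r_i⟩/∂R_{k,j}`,
and summing these coefficients against `P^grad` is exactly the `(k, j)` entry of
`A^grad(R) · R`. Hence `∇_R L(R) = -A^grad(R) · R`.
-/

lemma hasDerivAt_softplus (x : ℝ) : HasDerivAt softplus (sigmoid x) x := by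
  have hpos : (0 : ℝ) < 1 + Real.exp x := by positivity
  refine (((Real.hasDerivAt_exp x).const_add 1).log hpos.ne').congr_deriv ?_
  rw [sigmoid, Real.exp_neg]
  field_simp
  ring

section RowDot

variable {n m d : ℕ}

/-- `∂⟨r_u, r_i⟩ / ∂R_{k,j}`. -/
def rowDotPartial (R : Matrix (Fin n ⊕ Fin m) (Fin d) ℝ)
    (k : Fin n ⊕ Fin m) (j : Fin d) (u : Fin n) (i : Fin m) : ℝ :=
  (if k = Sum.inl u then R (Sum.inr i) j else 0)
    + (if k = Sum.inr i then R (Sum.inl u) j else 0)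

lemma rowDot_add_smul_single (R : Matrix (Fin n ⊕ Fin m) (Fin d) ℝ)
    (k : Fin n ⊕ Fin m) (j : Fin d) (t : ℝ) (u : Fin n) (i : Fin m) :
    rowDot (R + t • Matrix.single k j (1 : ℝ)) u i
      = rowDot R u i + t * rowDotPartial R k j u i := by
  rcases k with u₀ | i₀ <;>
    simp [rowDot, rowDotPartial, Matrix.single_apply, add_mul, mul_add, sum_add_distrib,
      ite_and, eq_comm, mul_comm]

lemma fromBlocks_zero_transpose_mul_apply (P : Matrix (Fin n) (Fin m) ℝ)
    (R : Matrix (Fin n ⊕ Fin m) (Fin d) ℝ) (k : Fin n ⊕ Fin m) (j : Fin d) :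
    (fromBlocks 0 P Pᵀ 0 * R) k j
      = ∑ p : Fin n × Fin m, P p.1 p.2 * rowDotPartial R k j p.1 p.2 := by
  rcases k with u | i
  · simp [Matrix.mul_apply, Fintype.sum_sum_type, Fintype.sum_prod_type, rowDotPartial,
      mul_ite]
  · simp [Matrix.mul_apply, Fintype.sum_sum_type, Fintype.sum_prod_type, rowDotPartial,
      mul_ite, eq_comm]

lemma pderivEntry_sum_comp_rowDot (g : Fin n × Fin m → ℝ → ℝ) (g' : Fin n × Fin m → ℝ)
    (R : Matrix (Fin n ⊕ Fin m) (Fin d) ℝ)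
    (hg : ∀ p, HasDerivAt (g p) (g' p) (rowDot R p.1 p.2)) (k : Fin n ⊕ Fin m) (j : Fin d) :
    pderivEntry (fun R' => ∑ p, g p (rowDot R' p.1 p.2)) R k j
      = ∑ p, g' p * rowDotPartial R k j p.1 p.2 := by
  unfold pderivEntry
  simp_rw [rowDot_add_smul_single]
  refine (HasDerivAt.fun_sum fun p _ => ?_).deriv
  have hline : HasDerivAt (fun t : ℝ => rowDot R p.1 p.2 + t * rowDotPartial R k j p.1 p.2)
      (rowDotPartial R k j p.1 p.2) 0 :=
    (hasDerivAt_mul_const _).const_add _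
  exact (hg p).comp_of_eq 0 hline (by simp)

end RowDot

section BCE

variable {n m d : ℕ} (Ω : Finset (Fin n × Fin m)) (β : ℝ)

def bcePairLoss (p : Fin n × Fin m) (x : ℝ) : ℝ :=
  if p ∈ Ω then softplus (-x) else β * softplus x

lemma bceLoss_eq_sum_bcePairLoss (R : Matrix (Fin n ⊕ Fin m) (Fin d) ℝ) :
    bceLoss Ω β R = ∑ p, bcePairLoss Ω β p (rowDot R p.1 p.2) := by
  rw [bceLoss, ← sum_add_sum_compl Ω, mul_sum]
  congr 1
  · exact sum_congr rfl fun p hp => by simp [bcePairLoss, hp]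
  · exact sum_congr rfl fun p hp => by simp [bcePairLoss, mem_compl.mp hp]

lemma hasDerivAt_bcePairLoss (p : Fin n × Fin m) (x : ℝ) :
    HasDerivAt (bcePairLoss Ω β p)
      (-(if p ∈ Ω then sigmoid (-x) else -β * sigmoid x)) x := by
  unfold bcePairLoss
  by_cases hp : p ∈ Ω
  · simp only [hp, if_true]
    exact ((hasDerivAt_softplus (-x)).comp x (hasDerivAt_neg x)).congr_deriv (by ring)
  · simp only [hp, if_false]
    exact ((hasDerivAt_softplus x).const_mul β).congr_deriv (by ring)

lemma pderivEntry_bceLoss (R : Matrix (Fin n ⊕ Fin m) (Fin d) ℝ)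
    (k : Fin n ⊕ Fin m) (j : Fin d) :
    pderivEntry (bceLoss Ω β) R k j
      = -∑ p : Fin n × Fin m, Pgrad Ω β R p.1 p.2 * rowDotPartial R k j p.1 p.2 := by
  rw [funext (bceLoss_eq_sum_bcePairLoss Ω β),
    pderivEntry_sum_comp_rowDot _ _ R fun p => hasDerivAt_bcePairLoss Ω β p _,
    ← sum_neg_distrib]
  exact sum_congr rfl fun p _ => neg_mul _ _

theorem gradLoss_eq_neg_Agrad_mul (R : Matrix (Fin n ⊕ Fin m) (Fin d) ℝ) :
    gradLoss Ω β R = -(Agrad Ω β R * R) := by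
  ext k j
  rw [neg_apply, Agrad, fromBlocks_zero_transpose_mul_apply]
  exact pderivEntry_bceLoss Ω β R k j

end BCE

theorem sgd_step_eq_linear_map_general {n m d : ℕ}
    (Ω : Finset (Fin n × Fin m)) (β : ℝ) (α : ℝ)
    (Rt Rt1 : Matrix (Fin n ⊕ Fin m) (Fin d) ℝ)
    (h : Rt1 = Rt - α • gradLoss Ω β Rt) :
    Rt1 = (1 + α • Agrad Ω β Rt) * Rt := by
  rw [h, gradLoss_eq_neg_Agrad_mul, Matrix.add_mul, Matrix.one_mul, Matrix.smul_mul,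
    smul_neg, sub_neg_eq_add]

/-- One step of gradient descent on the BCE loss is a linear map applied to the
current representations: if `R_{t+1} = R_t − α · ∇_R L(R_t)`, then
`R_{t+1} = (I + α · A^grad(R_t)) · R_t`. -/
theorem sgd_step_eq_linear_map {n m d : ℕ} (hn : 0 < n) (hm : 0 < m) (hd : 0 < d)
    (Ω : Finset (Fin n × Fin m)) (β : ℝ) (α : ℝ)
    (Rt Rt1 : Matrix (Fin n ⊕ Fin m) (Fin d) ℝ)
    (h : Rt1 = Rt - α • gradLoss Ω β Rt) :
    Rt1 = (1 + α • Agrad Ω β Rt) * Rt :=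
  sgd_step_eq_linear_map_general Ω β α Rt Rt1 h
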